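/- arXiv:1307.2612 — 7 statements merged into one kernel-verified Lean document; each statement's English description precedes it below -/
import Mathlib

section
/- Let (A,μ,α) be a color Hom-associative algebra. Then (A,[·,·],ε,α), where the bracket is defined for homogeneous x,y by [x,y] = μ(x,y) - ε(x,y)μ(y,x), is a color Hom-Lie algebra. -/
/-- The commutator bracket `[x,y] = μ(x,y) - ε(x,y)μ(y,x)` of a color
Hom-associative algebra `(A,μ,α)` makes `(A,[·,·],ε,α)` a color Hom-Lie algebra. -/
theorem stmt2 {K : Type*} [Field K] {Γ : Type*} [AddCommGroup Γ] [DecidableEq Γ]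
    {A : Type*} [AddCommGroup A] [Module K A]
    (G : Γ → Submodule K A) (hG : DirectSum.IsInternal G)
    (ε : Γ → Γ → K)
    (hε0 : ∀ a b, ε a b ≠ 0)
    (hε1 : ∀ a b, ε a b * ε b a = 1)
    (hε2 : ∀ a b c, ε a (b + c) = ε a b * ε a c)
    (hε3 : ∀ a b c, ε (a + b) c = ε a c * ε b c)
    (μ : A →ₗ[K] A →ₗ[K] A)
    (hμG : ∀ a b (x y : A), x ∈ G a → y ∈ G b → μ x y ∈ G (a + b))
    (α : Module.End K A)
    (hαG : ∀ a (x : A), x ∈ G a → α x ∈ G a)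
    (hassoc : ∀ x y z : A, μ (α x) (μ y z) = μ (μ x y) (α z)) :
    -- ε-skew-symmetry of the commutator bracket
    (∀ a b (x y : A), x ∈ G a → y ∈ G b →
      μ x y - ε a b • μ y x = -(ε a b) • (μ y x - ε b a • μ x y)) ∧
    -- ε-Hom-Jacobi identity of the commutator bracket
    (∀ a b c (x y z : A), x ∈ G a → y ∈ G b → z ∈ G c →
      ε c a • (μ (α x) (μ y z - ε b c • μ z y)
                - ε a (b + c) • μ (μ y z - ε b c • μ z y) (α x))
      + ε a b • (μ (α y) (μ z x - ε c a • μ x z)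
                - ε b (c + a) • μ (μ z x - ε c a • μ x z) (α y))
      + ε b c • (μ (α z) (μ x y - ε a b • μ y x)
                - ε c (a + b) • μ (μ x y - ε a b • μ y x) (α z)) = 0) := by
  constructor
  · intro a b x y _ _
    rw [neg_smul, smul_sub, smul_smul, hε1 a b, one_smul]
    abel
  · intro a b c x y z _ _ _
    have h1 : ε b a = (ε a b)⁻¹ := eq_inv_of_mul_eq_one_left (hε1 b a)
    have h2 : ε c b = (ε b c)⁻¹ := eq_inv_of_mul_eq_one_left (hε1 c b)
    have h3 : ε a c = (ε c a)⁻¹ := eq_inv_of_mul_eq_one_left (hε1 a c)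
    simp only [map_sub, map_smul, LinearMap.sub_apply, LinearMap.smul_apply, smul_sub,
      smul_smul, hassoc, hε2, hε3]
    match_scalars <;>
    · simp only [h1, h2, h3]
      field_simp [hε0 a b, hε0 b c, hε0 c a]
      try ring
end

section
/- Let (A,[·,·],ε,α) be a color Hom-Lie algebra and β: A → A an even endomorphism of the color Lie bracket structure (β[x,y] = [β(x),β(y)]). Then (A, [·,·]_β := β∘[·,·], ε, β∘α) is a color Hom-Lie algebra. -/
/-- Twisting a color Hom-Lie algebra `(A,[·,·],ε,α)` by an even bracket
endomorphism `β` yields a color Hom-Lie algebra `(A, β∘[·,·], ε, β∘α)`. -/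
theorem stmt3 {K : Type*} [Field K] {Γ : Type*} [AddCommGroup Γ] [DecidableEq Γ]
    {A : Type*} [AddCommGroup A] [Module K A]
    (G : Γ → Submodule K A) (hG : DirectSum.IsInternal G)
    (ε : Γ → Γ → K)
    (hε0 : ∀ a b, ε a b ≠ 0)
    (hε1 : ∀ a b, ε a b * ε b a = 1)
    (hε2 : ∀ a b c, ε a (b + c) = ε a b * ε a c)
    (hε3 : ∀ a b c, ε (a + b) c = ε a c * ε b c)
    (br : A →ₗ[K] A →ₗ[K] A)
    (hbrG : ∀ a b (x y : A), x ∈ G a → y ∈ G b → br x y ∈ G (a + b))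
    (α : Module.End K A)
    (hαG : ∀ a (x : A), x ∈ G a → α x ∈ G a)
    (hskew : ∀ a b (x y : A), x ∈ G a → y ∈ G b → br x y = -(ε a b) • br y x)
    (hjac : ∀ a b c (x y z : A), x ∈ G a → y ∈ G b → z ∈ G c →
      ε c a • br (α x) (br y z) + ε a b • br (α y) (br z x)
        + ε b c • br (α z) (br x y) = 0)
    (β : Module.End K A)
    (hβG : ∀ a (x : A), x ∈ G a → β x ∈ G a)
    (hβbr : ∀ x y : A, β (br x y) = br (β x) (β y)) :
    -- the new bracket β∘[·,·] respects the grading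
    (∀ a b (x y : A), x ∈ G a → y ∈ G b → β (br x y) ∈ G (a + b)) ∧
    -- ε-skew-symmetry of β∘[·,·]
    (∀ a b (x y : A), x ∈ G a → y ∈ G b → β (br x y) = -(ε a b) • β (br y x)) ∧
    -- ε-Hom-Jacobi identity for the bracket β∘[·,·] and twist β∘α
    (∀ a b c (x y z : A), x ∈ G a → y ∈ G b → z ∈ G c →
      ε c a • β (br (β (α x)) (β (br y z)))
        + ε a b • β (br (β (α y)) (β (br z x)))
        + ε b c • β (br (β (α z)) (β (br x y))) = 0) := by
  refine ⟨fun a b x y hx hy => hβG _ _ (hbrG a b x y hx hy), ?_, ?_⟩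
  · intro a b x y hx hy
    rw [hskew a b x y hx hy, map_smul]
  · intro a b c x y z hx hy hz
    have key : ∀ u v : A, β (br (β u) (β v)) = β (β (br u v)) := by
      intro u v; rw [← hβbr]
    rw [key, key, key]
    simp only [← map_smul β, ← map_add β]
    rw [hjac a b c x y z hx hy hz, map_zero, map_zero]
end

section
/- Let (A,[·,·],ε,α) be a multiplicative color Hom-Lie algebra. Then for each n ≥ 0 the n-th derived Hom-algebra A^(n) = (A, [·,·]^(n) := α^{2ⁿ-1}∘[·,·], ε, α^{2ⁿ}) is also a multiplicative color Hom-Lie algebra. -/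
/-- The n-th derived Hom-algebra `(A, α^{2ⁿ-1}∘[·,·], ε, α^{2ⁿ})` of a
multiplicative color Hom-Lie algebra is again a multiplicative color
Hom-Lie algebra. -/
theorem stmt5 {K : Type*} [Field K] {Γ : Type*} [AddCommGroup Γ] [DecidableEq Γ]
    {A : Type*} [AddCommGroup A] [Module K A]
    (G : Γ → Submodule K A) (hG : DirectSum.IsInternal G)
    (ε : Γ → Γ → K)
    (hε0 : ∀ a b, ε a b ≠ 0)
    (hε1 : ∀ a b, ε a b * ε b a = 1)
    (hε2 : ∀ a b c, ε a (b + c) = ε a b * ε a c)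
    (hε3 : ∀ a b c, ε (a + b) c = ε a c * ε b c)
    (br : A →ₗ[K] A →ₗ[K] A)
    (hbrG : ∀ a b (x y : A), x ∈ G a → y ∈ G b → br x y ∈ G (a + b))
    (α : Module.End K A)
    (hαG : ∀ a (x : A), x ∈ G a → α x ∈ G a)
    (hskew : ∀ a b (x y : A), x ∈ G a → y ∈ G b → br x y = -(ε a b) • br y x)
    (hjac : ∀ a b c (x y z : A), x ∈ G a → y ∈ G b → z ∈ G c →
      ε c a • br (α x) (br y z) + ε a b • br (α y) (br z x)
        + ε b c • br (α z) (br x y) = 0)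
    (hmul : ∀ x y : A, α (br x y) = br (α x) (α y)) :
    ∀ n : ℕ,
      -- grading of the derived bracket
      (∀ a b (x y : A), x ∈ G a → y ∈ G b →
        (α ^ (2 ^ n - 1)) (br x y) ∈ G (a + b)) ∧
      -- ε-skew-symmetry of the derived bracket
      (∀ a b (x y : A), x ∈ G a → y ∈ G b →
        (α ^ (2 ^ n - 1)) (br x y) = -(ε a b) • (α ^ (2 ^ n - 1)) (br y x)) ∧
      -- ε-Hom-Jacobi identity with twist α^{2ⁿ}
      (∀ a b c (x y z : A), x ∈ G a → y ∈ G b → z ∈ G c →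
        ε c a • (α ^ (2 ^ n - 1)) (br ((α ^ 2 ^ n) x) ((α ^ (2 ^ n - 1)) (br y z)))
          + ε a b • (α ^ (2 ^ n - 1)) (br ((α ^ 2 ^ n) y) ((α ^ (2 ^ n - 1)) (br z x)))
          + ε b c • (α ^ (2 ^ n - 1)) (br ((α ^ 2 ^ n) z) ((α ^ (2 ^ n - 1)) (br x y))) = 0) ∧
      -- multiplicativity
      (∀ x y : A, (α ^ 2 ^ n) ((α ^ (2 ^ n - 1)) (br x y))
          = (α ^ (2 ^ n - 1)) (br ((α ^ 2 ^ n) x) ((α ^ 2 ^ n) y))) := by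
  -- α^k commutes with the bracket
  have hcomm : ∀ (k : ℕ) (x y : A), (α ^ k) (br x y) = br ((α ^ k) x) ((α ^ k) y) := by
    intro k
    induction k with
    | zero => intro x y; simp
    | succ k ih =>
      intro x y
      simp only [pow_succ, Module.End.mul_apply, ih, hmul]
  -- α^k preserves the grading
  have hGpow : ∀ (k : ℕ) (a : Γ) (x : A), x ∈ G a → (α ^ k) x ∈ G a := by
    intro k
    induction k with
    | zero => intro a x hx; simpa using hx
    | succ k ih =>
      intro a x hx
      simp only [pow_succ, Module.End.mul_apply]
      exact ih a _ (hαG a x hx)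
  intro n
  set m : ℕ := 2 ^ n - 1 with hm
  have hmn : 2 ^ n = m + 1 := by
    have : 1 ≤ 2 ^ n := Nat.one_le_two_pow
    omega
  refine ⟨?_, ?_, ?_, ?_⟩
  · intro a b x y hx hy
    exact hGpow m (a + b) _ (hbrG a b x y hx hy)
  · intro a b x y hx hy
    rw [hskew a b x y hx hy]
    simp
  · intro a b c x y z hx hy hz
    have key : ∀ (u v w : A),
        (α ^ m) (br ((α ^ 2 ^ n) u) ((α ^ m) (br v w)))
          = (α ^ (2 * m)) (br (α u) (br v w)) := by
      intro u v w
      rw [hcomm m, ← Module.End.mul_apply (α ^ m) (α ^ m) (br v w), ← pow_add,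
        ← Module.End.mul_apply (α ^ m) (α ^ 2 ^ n) u, ← pow_add]
      have h1 : m + 2 ^ n = (m + m) + 1 := by omega
      have h2 : m + m = 2 * m := by omega
      rw [h1, h2, pow_succ, Module.End.mul_apply, hcomm (2 * m),
        hcomm (2 * m) (α u) (br v w), hcomm (2 * m) v w]
    rw [key x y z, key y z x, key z x y,
      ← map_smul (α ^ (2 * m)) (ε c a), ← map_smul (α ^ (2 * m)) (ε a b),
      ← map_smul (α ^ (2 * m)) (ε b c), ← map_add, ← map_add,
      hjac a b c x y z hx hy hz, map_zero]
  · intro x y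
    rw [← Module.End.mul_apply (α ^ 2 ^ n) (α ^ m) (br x y), ← pow_add,
      hcomm (2 ^ n + m), hcomm m, ← Module.End.mul_apply (α ^ m) (α ^ 2 ^ n) x,
      ← Module.End.mul_apply (α ^ m) (α ^ 2 ^ n) y, ← pow_add, Nat.add_comm]
end

section
/- Let A be an ε-commutative associative color algebra, σ: A → A an even algebra endomorphism, and Δ an even color σ-derivation of A (Δ(xy) = Δ(x)y + σ(x)Δ(y)). If σ(Ann(Δ)) ⊆ Ann(Δ), then the bracket [x·Δ, y·Δ]_σ := (σ(x)·Δ)∘(y·Δ) - ε(x,y)(σ(y)·Δ)∘(x·Δ) on the A-module A·Δ is well-defined and satisfies [x·Δ, y·Δ]_σ = (σ(x)Δ(y) - ε(x,y)σ(y)Δ(x))·Δ for all homogeneous x,y ∈ A. -/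
/-- Hartwig–Larsson–Silvestrov bracket on `A·Δ` for an ε-commutative
associative color algebra: well-definedness and the product formula
`[x·Δ, y·Δ]_σ = (σ(x)Δ(y) - ε(x,y)σ(y)Δ(x))·Δ`. -/
theorem stmt6 {K : Type*} [Field K] {Γ : Type*} [AddCommGroup Γ] [DecidableEq Γ]
    {A : Type*} [Ring A] [Algebra K A]
    (G : Γ → Submodule K A) (hG : DirectSum.IsInternal G)
    (ε : Γ → Γ → K)
    (hε0 : ∀ a b, ε a b ≠ 0)
    (hε1 : ∀ a b, ε a b * ε b a = 1)
    (hε2 : ∀ a b c, ε a (b + c) = ε a b * ε a c)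
    (hε3 : ∀ a b c, ε (a + b) c = ε a c * ε b c)
    -- the grading is multiplicative and A is ε-commutative
    (hGmul : ∀ a b (x y : A), x ∈ G a → y ∈ G b → x * y ∈ G (a + b))
    (hcomm : ∀ a b (x y : A), x ∈ G a → y ∈ G b → x * y = ε a b • (y * x))
    -- σ is an even algebra endomorphism
    (σ : A →ₐ[K] A)
    (hσG : ∀ a (x : A), x ∈ G a → σ x ∈ G a)
    -- Δ is an even color σ-derivation
    (Δ : A →ₗ[K] A)
    (hΔG : ∀ a (x : A), x ∈ G a → Δ x ∈ G a)
    (hΔder : ∀ x y : A, Δ (x * y) = Δ x * y + σ x * Δ y)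
    -- σ(Ann Δ) ⊆ Ann Δ
    (hAnn : ∀ x : A, (∀ z : A, x * Δ z = 0) → ∀ z : A, σ x * Δ z = 0) :
    -- the bracket satisfies [x·Δ, y·Δ]_σ = (σ(x)Δ(y) - ε(x,y)σ(y)Δ(x))·Δ
    (∀ a b (x y : A), x ∈ G a → y ∈ G b → ∀ z : A,
      σ x * Δ (y * Δ z) - ε a b • (σ y * Δ (x * Δ z))
        = (σ x * Δ y - ε a b • (σ y * Δ x)) * Δ z) ∧
    -- well-definedness in the first argument
    (∀ a b (x₁ x₂ y : A), x₁ ∈ G a → x₂ ∈ G a → y ∈ G b →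
      (∀ z : A, x₁ * Δ z = x₂ * Δ z) → ∀ z : A,
      σ x₁ * Δ (y * Δ z) - ε a b • (σ y * Δ (x₁ * Δ z))
        = σ x₂ * Δ (y * Δ z) - ε a b • (σ y * Δ (x₂ * Δ z))) ∧
    -- well-definedness in the second argument
    (∀ a b (x y₁ y₂ : A), x ∈ G a → y₁ ∈ G b → y₂ ∈ G b →
      (∀ z : A, y₁ * Δ z = y₂ * Δ z) → ∀ z : A,
      σ x * Δ (y₁ * Δ z) - ε a b • (σ y₁ * Δ (x * Δ z))
        = σ x * Δ (y₂ * Δ z) - ε a b • (σ y₂ * Δ (x * Δ z))) := by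
  refine ⟨?_, ?_, ?_⟩
  · intro a b x y hx hy z
    have hc : σ x * σ y = ε a b • (σ y * σ x) :=
      hcomm a b _ _ (hσG a x hx) (hσG b y hy)
    have key : σ x * (σ y * Δ (Δ z)) = ε a b • (σ y * (σ x * Δ (Δ z))) := by
      rw [← mul_assoc, ← mul_assoc, hc, smul_mul_assoc]
    rw [hΔder, hΔder, mul_add, mul_add, smul_add, sub_mul, smul_mul_assoc, key]
    simp only [mul_assoc]
    abel
  · intro a b x₁ x₂ y hx₁ hx₂ hy h z
    have h0 : ∀ w : A, (x₁ - x₂) * Δ w = 0 := by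
      intro w; rw [sub_mul, h w, sub_self]
    have h1 := hAnn _ h0 (y * Δ z)
    rw [map_sub, sub_mul, sub_eq_zero] at h1
    rw [h1, h z]
  · intro a b x y₁ y₂ hx hy₁ hy₂ h z
    have h0 : ∀ w : A, (y₁ - y₂) * Δ w = 0 := by
      intro w; rw [sub_mul, h w, sub_self]
    have h1 := hAnn _ h0 (x * Δ z)
    rw [map_sub, sub_mul, sub_eq_zero] at h1
    rw [h1, h z]
end

section
/- Let (A,[·,·],ε,α) be a multiplicative color Hom-Lie algebra and (M,β) an A-module with action [·,·]_M. Then the coboundary operators δ_r^n: C^n_{α,β}(A,M) → C^{n+1}_{α,β}(A,M) are well defined, i.e., for any f ∈ C^n_{α,β}(A,M) (so f∘α^{⊗n} = β∘f), the cochain δ_r^n(f) satisfies δ_r^n(f)∘α^{⊗(n+1)} = β∘δ_r^n(f). -/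
/-- Remove the `t`-th entry of a tuple. -/
def rmv {X : Type*} {n : ℕ} (t : Fin (n + 1)) (g : Fin (n + 1) → X) (i : Fin n) : X :=
  g (t.succAbove i)

/-- The coboundary operator `δ_r^n` of a color Hom-Lie algebra `(A,[·,·],ε,α)`
with coefficients in an `A`-module `(M,[·,·]_M,β)`, acting on degree-indexed
`n`-cochains of degree `γ`. -/
def cobound {K : Type*} [Field K] {Γ : Type*} [AddCommGroup Γ]
    {A : Type*} [AddCommGroup A] [Module K A]
    {M : Type*} [AddCommGroup M] [Module K M]
    (ε : Γ → Γ → K) (br : A →ₗ[K] A →ₗ[K] A) (α : Module.End K A)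
    (act : A →ₗ[K] M →ₗ[K] M)
    (r n : ℕ) (γ : Γ) (f : (Fin n → Γ) → (Fin n → A) → M)
    (d : Fin (n + 1) → Γ) (x : Fin (n + 1) → A) : M :=
  (∑ t : Fin (n + 1), ∑ s : Fin (n + 1),
    if h : (s : ℕ) < (t : ℕ) then
      ((-1 : K) ^ (t : ℕ) * ε (∑ i ∈ Finset.Ioo s t, d i) (d t)) •
        f (Function.update (rmv t d)
              ⟨(s : ℕ), lt_of_lt_of_le h (Nat.lt_succ_iff.mp t.isLt)⟩ (d s + d t))
          (Function.update (rmv t fun i => α (x i))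
              ⟨(s : ℕ), lt_of_lt_of_le h (Nat.lt_succ_iff.mp t.isLt)⟩ (br (x s) (x t)))
    else 0)
  + ∑ s : Fin (n + 1),
      ((-1 : K) ^ (s : ℕ) * ε (γ + ∑ i ∈ Finset.Iio s, d i) (d s)) •
        act ((α ^ (r + n - 1)) (x s)) (f (rmv s d) (rmv s x))

/-- The coboundary operator is well defined on cochains: if `f∘α = β∘f`, then
`δ_r^n(f)∘α^{⊗(n+1)} = β∘δ_r^n(f)`. -/
theorem stmt8 {K : Type*} [Field K] {Γ : Type*} [AddCommGroup Γ] [DecidableEq Γ]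
    {A : Type*} [AddCommGroup A] [Module K A]
    {M : Type*} [AddCommGroup M] [Module K M]
    (G : Γ → Submodule K A) (hG : DirectSum.IsInternal G)
    (GM : Γ → Submodule K M)
    (ε : Γ → Γ → K)
    (hε0 : ∀ a b, ε a b ≠ 0)
    (hε1 : ∀ a b, ε a b * ε b a = 1)
    (hε2 : ∀ a b c, ε a (b + c) = ε a b * ε a c)
    (hε3 : ∀ a b c, ε (a + b) c = ε a c * ε b c)
    -- multiplicative color Hom-Lie algebra structure
    (br : A →ₗ[K] A →ₗ[K] A)
    (hbrG : ∀ a b (x y : A), x ∈ G a → y ∈ G b → br x y ∈ G (a + b))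
    (α : Module.End K A)
    (hαG : ∀ a (x : A), x ∈ G a → α x ∈ G a)
    (hskew : ∀ a b (x y : A), x ∈ G a → y ∈ G b → br x y = -(ε a b) • br y x)
    (hjac : ∀ a b c (x y z : A), x ∈ G a → y ∈ G b → z ∈ G c →
      ε c a • br (α x) (br y z) + ε a b • br (α y) (br z x)
        + ε b c • br (α z) (br x y) = 0)
    (hmul : ∀ x y : A, α (br x y) = br (α x) (α y))
    -- A-module structure (M, act, β)
    (act : A →ₗ[K] M →ₗ[K] M)
    (hactG : ∀ a b (x : A) (m : M), x ∈ G a → m ∈ GM b → act x m ∈ GM (a + b))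
    (β : Module.End K M)
    (hβG : ∀ a (m : M), m ∈ GM a → β m ∈ GM a)
    (hβact : ∀ (x : A) (m : M), β (act x m) = act (α x) (β m))
    (hmod : ∀ a b (x y : A) (m : M), x ∈ G a → y ∈ G b →
      act (br x y) (β m) = act (α x) (act y m) - ε a b • act (α y) (act x m))
    -- f is an n-cochain of degree γ
    (r n : ℕ) (γ : Γ) (f : (Fin n → Γ) → (Fin n → A) → M)
    (hfcomp : ∀ (d : Fin n → Γ) (x : Fin n → A),
      f d (fun i => α (x i)) = β (f d x))
    (hfskew : ∀ (d : Fin n → Γ) (x : Fin n → A), (∀ i, x i ∈ G (d i)) →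
      ∀ i j : Fin n, (j : ℕ) = (i : ℕ) + 1 →
        f d x = -(ε (d i) (d j)) • f (d ∘ Equiv.swap i j) (x ∘ Equiv.swap i j)) :
    ∀ (d : Fin (n + 1) → Γ) (x : Fin (n + 1) → A), (∀ i, x i ∈ G (d i)) →
      cobound ε br α act r n γ f d (fun i => α (x i))
        = β (cobound ε br α act r n γ f d x) := by
  intro d x hx
  have hpow : ∀ (k : ℕ) (y : A), (α ^ k) (α y) = α ((α ^ k) y) := by
    intro k y
    rw [← Module.End.mul_apply, ← pow_succ, pow_succ', Module.End.mul_apply]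
  unfold cobound
  rw [map_add, map_sum, map_sum]
  congr 1
  · refine Finset.sum_congr rfl fun t _ => ?_
    rw [map_sum]
    refine Finset.sum_congr rfl fun s _ => ?_
    by_cases h : (s : ℕ) < (t : ℕ)
    · rw [dif_pos h, dif_pos h, map_smul]
      congr 1
      rw [← hfcomp]
      congr 1
      funext i
      rcases eq_or_ne i ⟨(s : ℕ), lt_of_lt_of_le h (Nat.lt_succ_iff.mp t.isLt)⟩ with hi | hi
      · subst hi
        rw [Function.update_self, Function.update_self, hmul]
      · rw [Function.update_of_ne hi, Function.update_of_ne hi]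
        rfl
    · rw [dif_neg h, dif_neg h, map_zero]
  · refine Finset.sum_congr rfl fun s _ => ?_
    rw [map_smul]
    congr 1
    have : rmv s (fun i => α (x i)) = fun i => α (rmv s x i) := rfl
    rw [this, hpow, hfcomp, hβact]
end

section
/- Let (A,[·,·],ε,α) be a multiplicative color Hom-Lie algebra and s an integer. Define ad_s(a)(x) = [α^s(a), x]. Then ad_s(α(x))∘α = α∘ad_s(x) and ad_s([x,y])∘α = ad_s(α(x))∘ad_s(y) - ε(x,y)ad_s(α(y))∘ad_s(x), so (A, ad_s, α) is a representation of A. -/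
/-!
Every power `α ^ s` is again multiplicative and grading-preserving (for negative `s`: an
automorphism mapping each summand of an internal direct sum into itself maps it onto itself,
since the images are independent and still span). Replacing `x, y` by `α ^ s x, α ^ s y`
therefore reduces both identities to `s = 0`. There the first is multiplicativity of `α`, and
the second is the ε-Hom-Jacobi identity rewritten by ε-skew-symmetry, first for homogeneous
`z` and then by linearity for all `z`.
-/

namespace DirectSum.IsInternal

variable {R M ι : Type*} [Ring R] [AddCommGroup M] [Module R M] [DecidableEq ι]
  {G : ι → Submodule R M}

theorem map_eq_of_map_le (hG : IsInternal G) (f : M ≃ₗ[R] M)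
    (hf : ∀ i, (G i).map (f : M →ₗ[R] M) ≤ G i) (i : ι) :
    (G i).map (f : M →ₗ[R] M) = G i := by
  have hsup : ⨆ i, (G i).map (f : M →ₗ[R] M) = ⊤ := by
    rw [← Submodule.map_iSup, hG.submodule_iSup_eq_top, Submodule.map_top, LinearEquiv.range]
  exact congrFun ((hG.submodule_iSupIndep.le_iff_eq_of_iSup_eq_top hsup).mp hf) i

theorem symm_apply_mem (hG : IsInternal G) (f : M ≃ₗ[R] M)
    (hf : ∀ i, ∀ x ∈ G i, f x ∈ G i) {i : ι} {x : M} (hx : x ∈ G i) :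
    f.symm x ∈ G i := by
  rw [← hG.map_eq_of_map_le f (fun j ↦ Submodule.map_le_iff_le_comap.mpr (hf j)) i] at hx
  obtain ⟨y, hy, rfl⟩ := hx
  simpa using hy

theorem zpow_apply_mem (hG : IsInternal G) (f : M ≃ₗ[R] M)
    (hf : ∀ i, ∀ x ∈ G i, f x ∈ G i) (n : ℤ) {i : ι} {x : M} (hx : x ∈ G i) :
    (f ^ n) x ∈ G i := by
  refine zpow_induction_right (P := fun g : M ≃ₗ[R] M ↦ ∀ i, ∀ x ∈ G i, g x ∈ G i)
    (fun _ _ hx ↦ hx) (fun g hg i x hx ↦ hg i _ (hf i x hx))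
    (fun g hg i x hx ↦ hg i _ (hG.symm_apply_mem f hf hx)) n i x hx

end DirectSum.IsInternal

theorem LinearEquiv.zpow_map_bracket {R M : Type*} [CommSemiring R] [AddCommMonoid M]
    [Module R M] {br : M →ₗ[R] M →ₗ[R] M} (f : M ≃ₗ[R] M)
    (hf : ∀ x y, f (br x y) = br (f x) (f y)) (n : ℤ) (x y : M) :
    (f ^ n) (br x y) = br ((f ^ n) x) ((f ^ n) y) := by
  have hf_symm : ∀ x y, f.symm (br x y) = br (f.symm x) (f.symm y) := fun x y ↦
    f.injective (by simp [hf])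
  refine zpow_induction_right
    (P := fun g : M ≃ₗ[R] M ↦ ∀ x y, g (br x y) = br (g x) (g y)) (fun _ _ ↦ rfl)
    (fun g hg x y ↦ (congrArg g (hf x y)).trans (hg _ _))
    (fun g hg x y ↦ (congrArg g (hf_symm x y)).trans (hg _ _)) n x y

theorem LinearEquiv.zpow_apply_comm {R M : Type*} [Semiring R] [AddCommMonoid M] [Module R M]
    (f : M ≃ₗ[R] M) (n : ℤ) (x : M) : (f ^ n) (f x) = f ((f ^ n) x) :=
  DFunLike.congr_fun ((Commute.refl f).zpow_left n).eq x

section ColorHomLie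

variable {R Γ A : Type*} [CommRing R] [AddCommGroup Γ] [AddCommGroup A] [Module R A]
  {G : Γ → Submodule R A} {ε : Γ → Γ → R} {br : A →ₗ[R] A →ₗ[R] A}
  {α : A →ₗ[R] A}

theorem ad_bracket_comp_of_mem
    (hε1 : ∀ a b, ε a b * ε b a = 1)
    (hε2 : ∀ a b c, ε a (b + c) = ε a b * ε a c)
    (hbrG : ∀ a b (x y : A), x ∈ G a → y ∈ G b → br x y ∈ G (a + b))
    (hαG : ∀ a (x : A), x ∈ G a → α x ∈ G a)
    (hskew : ∀ a b (x y : A), x ∈ G a → y ∈ G b → br x y = -(ε a b) • br y x)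
    (hjac : ∀ a b c (x y z : A), x ∈ G a → y ∈ G b → z ∈ G c →
      ε c a • br (α x) (br y z) + ε a b • br (α y) (br z x)
        + ε b c • br (α z) (br x y) = 0)
    {a b c : Γ} {x y z : A} (hx : x ∈ G a) (hy : y ∈ G b) (hz : z ∈ G c) :
    br (br x y) (α z) = br (α x) (br y z) - ε a b • br (α y) (br x z) := by
  have hj := hjac a b c x y z hx hy hz
  rw [hskew c a z x hz hx, hskew c (a + b) (α z) (br x y) (hαG c z hz) (hbrG a b x y hx hy),
    hε2] at hj
  simp only [map_smul, smul_smul] at hj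
  -- `hj` is now `ε c a` times the claimed identity, up to the factor `ε b c * ε c b = 1`
  linear_combination (norm := module) -ε a c • hj
    + hε1 a c • (br (α x) (br y z) - br (br x y) (α z) - ε a b • br (α y) (br x z))
    - hε1 b c • (ε a c * ε c a) • br (br x y) (α z)

theorem ad_bracket_comp
    (hG : ⨆ c, G c = ⊤)
    (hε1 : ∀ a b, ε a b * ε b a = 1)
    (hε2 : ∀ a b c, ε a (b + c) = ε a b * ε a c)
    (hbrG : ∀ a b (x y : A), x ∈ G a → y ∈ G b → br x y ∈ G (a + b))
    (hαG : ∀ a (x : A), x ∈ G a → α x ∈ G a)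
    (hskew : ∀ a b (x y : A), x ∈ G a → y ∈ G b → br x y = -(ε a b) • br y x)
    (hjac : ∀ a b c (x y z : A), x ∈ G a → y ∈ G b → z ∈ G c →
      ε c a • br (α x) (br y z) + ε a b • br (α y) (br z x)
        + ε b c • br (α z) (br x y) = 0)
    {a b : Γ} {x y : A} (hx : x ∈ G a) (hy : y ∈ G b) (z : A) :
    br (br x y) (α z) = br (α x) (br y z) - ε a b • br (α y) (br x z) := by
  have hz : z ∈ ⨆ c, G c := hG ▸ Submodule.mem_top
  induction hz using Submodule.iSup_induction' with
  | mem c z hz => exact ad_bracket_comp_of_mem hε1 hε2 hbrG hαG hskew hjac hx hy hz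
  | zero => simp
  | add z₁ z₂ _ _ h₁ h₂ =>
    simp only [map_add, h₁, h₂, smul_add]
    abel

end ColorHomLie

theorem stmt11_general {K : Type*} [Field K] {Γ : Type*} [AddCommGroup Γ] [DecidableEq Γ]
    {A : Type*} [AddCommGroup A] [Module K A]
    (G : Γ → Submodule K A) (hG : DirectSum.IsInternal G)
    (ε : Γ → Γ → K)
    (hε1 : ∀ a b, ε a b * ε b a = 1)
    (hε2 : ∀ a b c, ε a (b + c) = ε a b * ε a c)
    (br : A →ₗ[K] A →ₗ[K] A)
    (hbrG : ∀ a b (x y : A), x ∈ G a → y ∈ G b → br x y ∈ G (a + b))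
    (α : A ≃ₗ[K] A)
    (hαG : ∀ a (x : A), x ∈ G a → α x ∈ G a)
    (hskew : ∀ a b (x y : A), x ∈ G a → y ∈ G b → br x y = -(ε a b) • br y x)
    (hjac : ∀ a b c (x y z : A), x ∈ G a → y ∈ G b → z ∈ G c →
      ε c a • br (α x) (br y z) + ε a b • br (α y) (br z x)
        + ε b c • br (α z) (br x y) = 0)
    (hmul : ∀ x y : A, α (br x y) = br (α x) (α y))
    (s : ℤ) :
    -- ad_s(α(x)) ∘ α = α ∘ ad_s(x)
    (∀ x z : A, br ((α ^ s) (α x)) (α z) = α (br ((α ^ s) x) z)) ∧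
    -- ad_s([x,y]) ∘ α = ad_s(α(x)) ∘ ad_s(y) - ε(x,y) ad_s(α(y)) ∘ ad_s(x)
    (∀ a b (x y : A), x ∈ G a → y ∈ G b → ∀ z : A,
      br ((α ^ s) (br x y)) (α z)
        = br ((α ^ s) (α x)) (br ((α ^ s) y) z)
          - ε a b • br ((α ^ s) (α y)) (br ((α ^ s) x) z)) := by
  refine ⟨fun x z ↦ by rw [α.zpow_apply_comm, hmul], fun a b x y hx hy z ↦ ?_⟩
  rw [α.zpow_map_bracket hmul, α.zpow_apply_comm, α.zpow_apply_comm]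
  exact ad_bracket_comp hG.submodule_iSup_eq_top hε1 hε2 hbrG hαG hskew hjac
    (hG.zpow_apply_mem α hαG s hx) (hG.zpow_apply_mem α hαG s hy) z

/-- For a multiplicative color Hom-Lie algebra `(A,[·,·],ε,α)` with `α`
invertible and any integer `s`, `ad_s(a)(x) = [α^s(a), x]` defines a
representation `(A, ad_s, α)`. -/
theorem stmt11 {K : Type*} [Field K] {Γ : Type*} [AddCommGroup Γ] [DecidableEq Γ]
    {A : Type*} [AddCommGroup A] [Module K A]
    (G : Γ → Submodule K A) (hG : DirectSum.IsInternal G)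
    (ε : Γ → Γ → K)
    (hε0 : ∀ a b, ε a b ≠ 0)
    (hε1 : ∀ a b, ε a b * ε b a = 1)
    (hε2 : ∀ a b c, ε a (b + c) = ε a b * ε a c)
    (hε3 : ∀ a b c, ε (a + b) c = ε a c * ε b c)
    (br : A →ₗ[K] A →ₗ[K] A)
    (hbrG : ∀ a b (x y : A), x ∈ G a → y ∈ G b → br x y ∈ G (a + b))
    (α : A ≃ₗ[K] A)
    (hαG : ∀ a (x : A), x ∈ G a → α x ∈ G a)
    (hskew : ∀ a b (x y : A), x ∈ G a → y ∈ G b → br x y = -(ε a b) • br y x)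
    (hjac : ∀ a b c (x y z : A), x ∈ G a → y ∈ G b → z ∈ G c →
      ε c a • br (α x) (br y z) + ε a b • br (α y) (br z x)
        + ε b c • br (α z) (br x y) = 0)
    (hmul : ∀ x y : A, α (br x y) = br (α x) (α y))
    (s : ℤ) :
    -- ad_s(α(x)) ∘ α = α ∘ ad_s(x)
    (∀ x z : A, br ((α ^ s) (α x)) (α z) = α (br ((α ^ s) x) z)) ∧
    -- ad_s([x,y]) ∘ α = ad_s(α(x)) ∘ ad_s(y) - ε(x,y) ad_s(α(y)) ∘ ad_s(x)
    (∀ a b (x y : A), x ∈ G a → y ∈ G b → ∀ z : A,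
      br ((α ^ s) (br x y)) (α z)
        = br ((α ^ s) (α x)) (br ((α ^ s) y) z)
          - ε a b • br ((α ^ s) (α y)) (br ((α ^ s) x) z)) :=
  stmt11_general G hG ε hε1 hε2 br hbrG α hαG hskew hjac hmul s
end

section
/- Let (A,[·,·],ε,α) be a multiplicative color Hom-Lie algebra. If D_γ ∈ GDer_{α^k}(A) is a homogeneous generalized α^k-derivation of degree γ (with associated maps D', D'') and Δ_{γ'} ∈ C_{α^{k'}}(A) is a homogeneous element of the α^{k'}-centroid of degree γ', then Δ_{γ'}∘D_γ is a homogeneous generalized α^{k+k'}-derivation of degree γ+γ'. -/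
/-- If `D_γ` is a homogeneous generalized `α^k`-derivation of degree `γ` and
`Δ_{γ'}` is a homogeneous element of the `α^{k'}`-centroid of degree `γ'`,
then `Δ_{γ'}∘D_γ` is a homogeneous generalized `α^{k+k'}`-derivation of degree
`γ + γ'`. -/
theorem stmt16 {K : Type*} [Field K] {Γ : Type*} [AddCommGroup Γ] [DecidableEq Γ]
    {A : Type*} [AddCommGroup A] [Module K A]
    (G : Γ → Submodule K A) (hG : DirectSum.IsInternal G)
    (ε : Γ → Γ → K)
    (hε0 : ∀ a b, ε a b ≠ 0)
    (hε1 : ∀ a b, ε a b * ε b a = 1)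
    (hε2 : ∀ a b c, ε a (b + c) = ε a b * ε a c)
    (hε3 : ∀ a b c, ε (a + b) c = ε a c * ε b c)
    (br : A →ₗ[K] A →ₗ[K] A)
    (hbrG : ∀ a b (x y : A), x ∈ G a → y ∈ G b → br x y ∈ G (a + b))
    (α : Module.End K A)
    (hαG : ∀ a (x : A), x ∈ G a → α x ∈ G a)
    (hskew : ∀ a b (x y : A), x ∈ G a → y ∈ G b → br x y = -(ε a b) • br y x)
    (hjac : ∀ a b c (x y z : A), x ∈ G a → y ∈ G b → z ∈ G c →
      ε c a • br (α x) (br y z) + ε a b • br (α y) (br z x)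
        + ε b c • br (α z) (br x y) = 0)
    (hmul : ∀ x y : A, α (br x y) = br (α x) (α y))
    (k k' : ℕ) (γ γ' : Γ)
    -- D is a homogeneous generalized α^k-derivation of degree γ
    (D D' D'' : Module.End K A)
    (hDG : ∀ a (x : A), x ∈ G a → D x ∈ G (a + γ))
    (hD'G : ∀ a (x : A), x ∈ G a → D' x ∈ G (a + γ))
    (hD''G : ∀ a (x : A), x ∈ G a → D'' x ∈ G (a + γ))
    (hDα : D ∘ₗ α = α ∘ₗ D) (hD'α : D' ∘ₗ α = α ∘ₗ D')
    (hD''α : D'' ∘ₗ α = α ∘ₗ D'')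
    (hgen : ∀ a b (x y : A), x ∈ G a → y ∈ G b →
      D'' (br x y) = br (D x) ((α ^ k) y) + ε γ a • br ((α ^ k) x) (D' y))
    -- Δ is a homogeneous element of the α^{k'}-centroid of degree γ'
    (Δ : Module.End K A)
    (hΔG : ∀ a (x : A), x ∈ G a → Δ x ∈ G (a + γ'))
    (hΔα : Δ ∘ₗ α = α ∘ₗ Δ)
    (hΔcent : ∀ a b (x y : A), x ∈ G a → y ∈ G b →
      Δ (br x y) = br (Δ x) ((α ^ k') y) ∧
      Δ (br x y) = ε γ' a • br ((α ^ k') x) (Δ y)) :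
    -- Δ∘D is a homogeneous generalized α^{k+k'}-derivation of degree γ + γ'
    ∃ E' E'' : Module.End K A,
      (∀ a (x : A), x ∈ G a → (Δ ∘ₗ D) x ∈ G (a + (γ + γ'))) ∧
      (∀ a (x : A), x ∈ G a → E' x ∈ G (a + (γ + γ'))) ∧
      (∀ a (x : A), x ∈ G a → E'' x ∈ G (a + (γ + γ'))) ∧
      (Δ ∘ₗ D) ∘ₗ α = α ∘ₗ (Δ ∘ₗ D) ∧ E' ∘ₗ α = α ∘ₗ E' ∧ E'' ∘ₗ α = α ∘ₗ E'' ∧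
      (∀ a b (x y : A), x ∈ G a → y ∈ G b →
        E'' (br x y) = br ((Δ ∘ₗ D) x) ((α ^ (k + k')) y)
          + ε (γ + γ') a • br ((α ^ (k + k')) x) (E' y)) := by
  have hpowG : ∀ (n : ℕ) a (x : A), x ∈ G a → (α ^ n) x ∈ G a := by
    intro n
    induction n with
    | zero => intro a x hx; simpa using hx
    | succ m ih =>
      intro a x hx
      rw [pow_succ']
      exact hαG a _ (ih a x hx)
  refine ⟨Δ ∘ₗ D', Δ ∘ₗ D'', ?_, ?_, ?_, ?_, ?_, ?_, ?_⟩
  · intro a x hx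
    simpa [add_assoc] using hΔG (a + γ) _ (hDG a x hx)
  · intro a x hx
    simpa [add_assoc] using hΔG (a + γ) _ (hD'G a x hx)
  · intro a x hx
    simpa [add_assoc] using hΔG (a + γ) _ (hD''G a x hx)
  · rw [LinearMap.comp_assoc, hDα, ← LinearMap.comp_assoc, hΔα, LinearMap.comp_assoc]
  · rw [LinearMap.comp_assoc, hD'α, ← LinearMap.comp_assoc, hΔα, LinearMap.comp_assoc]
  · rw [LinearMap.comp_assoc, hD''α, ← LinearMap.comp_assoc, hΔα, LinearMap.comp_assoc]
  · intro a b x y hx hy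
    have hpk : ∀ z : A, (α ^ k') ((α ^ k) z) = (α ^ (k + k')) z := by
      intro z
      rw [add_comm, pow_add]
      rfl
    have h1 : Δ (br (D x) ((α ^ k) y)) =
        br ((Δ ∘ₗ D) x) ((α ^ (k + k')) y) := by
      have := (hΔcent (a + γ) b (D x) ((α ^ k) y) (hDG a x hx) (hpowG k b y hy)).1
      simpa [hpk] using this
    have h2 : Δ (br ((α ^ k) x) (D' y)) =
        ε γ' a • br ((α ^ (k + k')) x) ((Δ ∘ₗ D') y) := by
      have := (hΔcent a (b + γ) ((α ^ k) x) (D' y) (hpowG k a x hx) (hD'G b y hy)).2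
      simpa [hpk] using this
    have := hgen a b x y hx hy
    calc (Δ ∘ₗ D'') (br x y)
        = Δ (br (D x) ((α ^ k) y) + ε γ a • br ((α ^ k) x) (D' y)) := by
          simp [this]
      _ = Δ (br (D x) ((α ^ k) y)) + ε γ a • Δ (br ((α ^ k) x) (D' y)) := by
          simp [map_add, map_smul]
      _ = br ((Δ ∘ₗ D) x) ((α ^ (k + k')) y)
            + ε (γ + γ') a • br ((α ^ (k + k')) x) ((Δ ∘ₗ D') y) := by
          rw [h1, h2, smul_smul, hε3 γ γ' a]
end
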